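/- Let G be a finite abelian group, g ∈ G an element of order r with r ≥ 2, let λ₁, λ₂ ∈ ℂ, and let a : ℕ → ℂ be the sequence with a(0) = 1, a(1) = λ₁ + λ₂, and a(n+2) = (λ₁ + λ₂)·a(n+1) − λ₁λ₂·a(n) for all n ≥ 0. Set d = λ₁λ₂. Then for every t ∈ ℂ, the product over all group homomorphisms χ : G → ℂˣ of (1 − a(1)·χ(g)·t + d·(χ(g)·t)²) equals (1 − (a(r) − d·a(r−2))·t^r + d^r·t^{2r})^{|G|/r}. -/

import Mathlib

/-!
Evaluation at `g` maps the character group of `G` onto the `r`-th roots of unity, since every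
character of `⟨g⟩` extends to `G`; as a surjective homomorphism it has fibres of size `|G| / r`.
Hence the product is the `|G| / r`-th power of
`∏_{ζ^r = 1} (1 - λ₁ t ζ)(1 - λ₂ t ζ) = (1 - λ₁^r t^r)(1 - λ₂^r t^r)`, and the recursion gives
`a(r) - λ₁λ₂ a(r - 2) = λ₁^r + λ₂^r`.
-/

open Finset Polynomial

theorem MonoidHom.finprod_comp_of_surjective {A B M : Type*} [Group A] [Group B] [CommMonoid M]
    [Finite A] (φ : A →* B) (hφ : Function.Surjective φ) (f : B → M) :
    ∏ᶠ a, f (φ a) = (∏ᶠ b, f b) ^ (Nat.card A / Nat.card B) := by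
  classical
  have := Fintype.ofFinite A
  have := Finite.of_surjective φ hφ
  have := Fintype.ofFinite B
  have hker : Nat.card A / Nat.card B = Nat.card φ.ker := by
    rw [← φ.ker.card_mul_index, Subgroup.index_ker, MonoidHom.range_eq_top.mpr hφ,
      Subgroup.card_top, Nat.mul_div_cancel _ Nat.card_pos]
  rw [finprod_eq_prod_of_fintype, finprod_eq_prod_of_fintype, Finset.prod_comp, ← prod_pow,
    image_univ_of_surjective hφ, hker]
  refine prod_congr rfl fun b _ => congrArg _ ?_
  rw [MonoidHom.card_fiber_eq_of_mem_range φ (hφ b) ⟨1, map_one φ⟩, Nat.card_eq_fintype_card,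
    Fintype.card_subtype]
  simp only [MonoidHom.mem_ker]

theorem finprod_rootsOfUnity_eq_prod_nthRootsFinset {R N : Type*} [CommRing R] [IsDomain R]
    [CommMonoid N] {n : ℕ} (hn : 0 < n) (f : R → N) :
    ∏ᶠ ζ : rootsOfUnity n R, f ((ζ : Rˣ) : R) = ∏ x ∈ nthRootsFinset n (1 : R), f x := by
  have : NeZero n := ⟨hn.ne'⟩
  have := Fintype.ofFinite (rootsOfUnity n R)
  rw [finprod_eq_prod_of_fintype]
  refine prod_nbij (fun ζ => ((ζ : Rˣ) : R)) (fun ζ _ => ?_) (fun ζ _ η _ h => ?_)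
    (fun x hx => ?_) (fun _ _ => rfl)
  · exact (mem_nthRootsFinset hn 1).2
      (by simpa using congrArg Units.val ((mem_rootsOfUnity _ _).1 ζ.2))
  · exact Subtype.ext (Units.ext h)
  · exact ⟨(rootsOfUnityEquivNthRoots R n).symm ⟨x, by simpa [nthRootsFinset] using hx⟩,
      by simp, rfl⟩

theorem IsPrimitiveRoot.prod_one_sub_mul_nthRootsFinset {R : Type*} [CommRing R] [IsDomain R]
    {ζ : R} {n : ℕ} (hζ : IsPrimitiveRoot ζ n) (hn : 0 < n) (x : R) :
    ∏ μ ∈ nthRootsFinset n (1 : R), (1 - x * μ) = 1 - x ^ n := by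
  have h := hζ.pow_sub_pow_eq_prod_sub_mul 1 x hn
  rw [one_pow] at h
  simp only [h, mul_comm]

section Characters

variable {G M : Type*} [CommGroup G] [CommMonoid M]

noncomputable def MonoidHom.evalRootsOfUnity (g : G) :
    (G →* Mˣ) →* rootsOfUnity (orderOf g) M :=
  (MonoidHom.eval g).codRestrict _ fun χ => by
    show χ g ^ orderOf g = 1
    rw [← map_pow, pow_orderOf_eq_one, map_one]

theorem MonoidHom.evalRootsOfUnity_surjective [Finite G]
    [HasEnoughRootsOfUnity M (Monoid.exponent G)] (g : G) :
    Function.Surjective (evalRootsOfUnity (M := M) g) := by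
  intro ζ
  let g' : Subgroup.zpowers g := ⟨g, Subgroup.mem_zpowers g⟩
  have hgen : ∀ x : Subgroup.zpowers g, x ∈ Subgroup.zpowers g' := by
    rintro ⟨_, k, rfl⟩
    exact ⟨k, Subtype.ext (by simp [g'])⟩
  have hord : orderOf (ζ : Mˣ) ∣ orderOf g' := by
    rw [Subgroup.orderOf_mk]
    exact orderOf_dvd_of_pow_eq_one ((mem_rootsOfUnity _ _).1 ζ.2)
  obtain ⟨χ, hχ⟩ := MonoidHom.domRestrict_surjective (M := M) (Subgroup.zpowers g)
    (monoidHomOfForallMemZpowers hgen hord)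
  refine ⟨χ, Subtype.ext ?_⟩
  show χ g = ζ
  simpa [monoidHomOfForallMemZpowers_apply_gen] using DFunLike.congr_fun hχ g'

end Characters

theorem finprod_monoidHom_apply_eq_pow {G R N : Type*} [CommGroup G] [Finite G] [CommRing R]
    [IsDomain R] [CommMonoid N] [HasEnoughRootsOfUnity R (Monoid.exponent G)] (g : G)
    (f : R → N) :
    ∏ᶠ χ : G →* Rˣ, f (χ g) =
      (∏ x ∈ nthRootsFinset (orderOf g) (1 : R), f x) ^ (Nat.card G / orderOf g) := by
  have : Finite (G →* Rˣ) :=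
    .of_equiv G (CommGroup.monoidHom_mulEquiv_of_hasEnoughRootsOfUnity G R).some.toEquiv.symm
  have : NeZero (Monoid.exponent G) := ⟨Monoid.exponent_ne_zero_of_finite⟩
  have : NeZero (orderOf g) := ⟨(orderOf_pos g).ne'⟩
  have : HasEnoughRootsOfUnity R (orderOf g) := .of_dvd R (Monoid.order_dvd_exponent g)
  calc ∏ᶠ χ : G →* Rˣ, f (χ g)
      = (∏ᶠ ζ : rootsOfUnity (orderOf g) R, f ((ζ : Rˣ) : R)) ^
          (Nat.card (G →* Rˣ) / Nat.card (rootsOfUnity (orderOf g) R)) :=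
        (MonoidHom.evalRootsOfUnity (M := R) g).finprod_comp_of_surjective
          (MonoidHom.evalRootsOfUnity_surjective g) fun ζ => f ((ζ : Rˣ) : R)
    _ = _ := by
        rw [finprod_rootsOfUnity_eq_prod_nthRootsFinset (orderOf_pos g),
          CommGroup.card_monoidHom_of_hasEnoughRootsOfUnity,
          HasEnoughRootsOfUnity.natCard_rootsOfUnity]

theorem sub_mul_eq_pow_add_pow_of_recurrence {R : Type*} [CommRing R] {x y : R} {a : ℕ → R}
    (h0 : a 0 = 1) (h1 : a 1 = x + y)
    (hrec : ∀ n, a (n + 2) = (x + y) * a (n + 1) - x * y * a n) (n : ℕ) :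
    a (n + 2) - x * y * a n = x ^ (n + 2) + y ^ (n + 2) := by
  induction n using Nat.twoStepInduction with
  | zero => rw [hrec, h1, h0]; ring
  | one => rw [hrec, hrec, h1, h0]; ring
  | more n ih₀ ih₁ =>
    linear_combination hrec (n + 2) + (x + y) * ih₁ - x * y * ih₀ - x * y * hrec n

/-- Local form of Theorem 4.1: with `g ∈ G` of order `r ≥ 2`, `λ₁, λ₂ ∈ ℂ`, `d = λ₁λ₂`,
and `a` satisfying the Hecke recursion `a 0 = 1`, `a 1 = λ₁+λ₂`,
`a (n+2) = (λ₁+λ₂)·a (n+1) − d·a n`, the product over all characters `χ : G →* ℂˣ` of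
`(1 − a(1)·χ(g)·t + d·(χ(g)·t)²)` equals
`(1 − (a(r) − d·a(r−2))·t^r + d^r·t^{2r})^(|G|/r)`. -/
theorem prod_characters_euler_factor {G : Type*} [CommGroup G] [Finite G]
    (g : G) (r : ℕ) (hr : orderOf g = r) (hr2 : 2 ≤ r)
    (l₁ l₂ : ℂ) (a : ℕ → ℂ)
    (h0 : a 0 = 1) (h1 : a 1 = l₁ + l₂)
    (hrec : ∀ n : ℕ, a (n + 2) = (l₁ + l₂) * a (n + 1) - l₁ * l₂ * a n) (t : ℂ) :
    (∏ᶠ χ : G →* ℂˣ,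
        (1 - a 1 * ((χ g : ℂ) * t) + (l₁ * l₂) * ((χ g : ℂ) * t) ^ 2))
      = (1 - (a r - (l₁ * l₂) * a (r - 2)) * t ^ r
            + (l₁ * l₂) ^ r * t ^ (2 * r)) ^ (Nat.card G / r) := by
  have : NeZero (Monoid.exponent G) := ⟨Monoid.exponent_ne_zero_of_finite⟩
  have hζ := Complex.isPrimitiveRoot_exp r (by omega)
  have hpow : a r - l₁ * l₂ * a (r - 2) = l₁ ^ r + l₂ ^ r := by
    obtain ⟨n, rfl⟩ : ∃ n, r = n + 2 := ⟨r - 2, by omega⟩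
    exact sub_mul_eq_pow_add_pow_of_recurrence h0 h1 hrec n
  have hfac : ∀ z : ℂ, 1 - a 1 * (z * t) + l₁ * l₂ * (z * t) ^ 2 =
      (1 - l₁ * t * z) * (1 - l₂ * t * z) := fun z => by rw [h1]; ring
  simp_rw [hfac]
  rw [finprod_monoidHom_apply_eq_pow g fun z => (1 - l₁ * t * z) * (1 - l₂ * t * z), hr,
    prod_mul_distrib, hζ.prod_one_sub_mul_nthRootsFinset (by omega),
    hζ.prod_one_sub_mul_nthRootsFinset (by omega), hpow]
  ring
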